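/- Let a > 0, b ≥ 0 and c ∈ ℝ with b + c < −1. Then there is a constant C = C(a,b,c) such that for all t ≥ r > 0, ∫_0^{t−r} λ^b ⟨λ⟩^c (t−r−λ)^{a−1} dλ ≤ C (t−r)^{a+b} ⟨t−r⟩^{−b−1}, where ⟨λ⟩ = 1+|λ|. -/

import Mathlib

/-!
Write `s = t - r` and split the integral at `λ = s / 2`. On `(0, s/2]` the kernel
`(s - λ)^(a-1)` is comparable to `s^(a-1)`, and `∫₀ˢ λ^b ⟨λ⟩^c dλ` is at most a constant times
`min(s, 1)^(b+1)`: near `0` because `b > -1`, and globally because `b + c < -1` makes the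
integral over `(0, ∞)` finite. On `[s/2, s]` the weight `λ^b ⟨λ⟩^c` is comparable to
`s^b ⟨s/2⟩^c ≤ s^b ⟨s/2⟩^(-b-1)`, while `∫₀ˢ (s - λ)^(a-1) dλ = s^a / a`. Since
`min(s, 1) ≤ 2s / (1 + s)`, both halves are bounded by a constant times
`s^(a-1) (2s / ⟨s⟩)^(b+1) = 2^(b+1) s^(a+b) ⟨s⟩^(-b-1)`.
-/

open MeasureTheory Set

lemma rpow_le_max_mul_rpow_of_half_le {p s x : ℝ} (hs : 0 < s) (hx : s / 2 ≤ x) (hxs : x ≤ s) :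
    x ^ p ≤ max 1 (2 ^ (-p)) * s ^ p := by
  have hsp : 0 ≤ s ^ p := Real.rpow_nonneg hs.le p
  rcases le_total 0 p with hp | hp
  · calc x ^ p ≤ s ^ p := Real.rpow_le_rpow (by linarith) hxs hp
      _ ≤ max 1 (2 ^ (-p)) * s ^ p := le_mul_of_one_le_left hsp (le_max_left _ _)
  · calc x ^ p ≤ (s / 2) ^ p := Real.rpow_le_rpow_of_nonpos (by positivity) hx hp
      _ = 2 ^ (-p) * s ^ p := by
          rw [Real.div_rpow hs.le zero_le_two, Real.rpow_neg zero_le_two, div_eq_inv_mul]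
      _ ≤ max 1 (2 ^ (-p)) * s ^ p := mul_le_mul_of_nonneg_right (le_max_right _ _) hsp

lemma min_le_two_mul_div_one_add {s : ℝ} (hs : 0 ≤ s) : min s 1 ≤ 2 * s / (1 + s) := by
  rw [le_div_iff₀ (by positivity)]
  rcases le_total s 1 with h | h
  · rw [min_eq_left h]; nlinarith
  · rw [min_eq_right h]; linarith

lemma mul_rpow_two_mul_div_one_add {a b s : ℝ} (hs : 0 < s) :
    s ^ (a - 1) * (2 * s / (1 + s)) ^ (b + 1) = 2 ^ (b + 1) * s ^ (a + b) * (1 + s) ^ (-b - 1) := by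
  rw [Real.div_rpow (by positivity) (by positivity), Real.mul_rpow zero_le_two hs.le,
    show -b - 1 = -(b + 1) by ring, Real.rpow_neg (by positivity), div_eq_mul_inv,
    show a + b = (a - 1) + (b + 1) by ring, Real.rpow_add hs (a - 1) (b + 1)]
  ring

lemma intervalIntegrable_sub_rpow {p : ℝ} (hp : -1 < p) (s : ℝ) :
    IntervalIntegrable (fun x : ℝ => (s - x) ^ p) volume 0 s := by
  simpa using
    ((intervalIntegral.intervalIntegrable_rpow' (a := 0) (b := s) hp).comp_sub_left s).symm

lemma integral_sub_rpow {p : ℝ} (hp : -1 < p) (s : ℝ) :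
    ∫ x in (0 : ℝ)..s, (s - x) ^ p = s ^ (p + 1) / (p + 1) := by
  rw [intervalIntegral.integral_comp_sub_left (fun x => x ^ p) s, sub_self, sub_zero,
    integral_rpow (Or.inl hp), Real.zero_rpow (by linarith), sub_zero]

section
variable {b c : ℝ}

lemma integrableOn_rpow_mul_one_add_rpow (hb : -1 < b) (hbc : b + c < -1) :
    IntegrableOn (fun x : ℝ => x ^ b * (1 + x) ^ c) (Ioi 0) := by
  have hc : c ≤ 0 := by linarith
  have hmeas :
      AEStronglyMeasurable (fun x : ℝ => x ^ b * (1 + x) ^ c) (volume.restrict (Ioi 0)) :=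
    (by fun_prop : Measurable fun x : ℝ => x ^ b * (1 + x) ^ c).aestronglyMeasurable
  rw [← Ioc_union_Ioi_eq_Ioi zero_le_one]
  refine IntegrableOn.union ?_ ?_
  · have hg : IntegrableOn (fun x : ℝ => x ^ b) (Ioc 0 1) :=
      (intervalIntegrable_iff_integrableOn_Ioc_of_le zero_le_one).1
        (intervalIntegral.intervalIntegrable_rpow' hb)
    refine hg.mono' (hmeas.mono_set Ioc_subset_Ioi_self) ((ae_restrict_iff' measurableSet_Ioc).2 ?_)
    refine .of_forall fun x ⟨hx, _⟩ => ?_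
    rw [Real.norm_of_nonneg (by positivity)]
    exact mul_le_of_le_one_right (by positivity)
      (Real.rpow_le_one_of_one_le_of_nonpos (by linarith) hc)
  · refine (integrableOn_Ioi_rpow_of_lt hbc zero_lt_one).mono'
      (hmeas.mono_set (Ioi_subset_Ioi zero_le_one)) ((ae_restrict_iff' measurableSet_Ioi).2 ?_)
    refine .of_forall fun x (hx : 1 < x) => ?_
    rw [Real.norm_of_nonneg (by positivity), Real.rpow_add (by linarith)]
    gcongr ?_ * ?_
    exact Real.rpow_le_rpow_of_nonpos (by linarith) (by linarith) hc

lemma setIntegral_rpow_mul_one_add_rpow_le (hb : -1 < b) (hc : c ≤ 0) {s : ℝ} (hs : 0 ≤ s) :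
    ∫ x in Ioc 0 s, x ^ b * (1 + x) ^ c ≤ s ^ (b + 1) / (b + 1) := by
  have hint := (intervalIntegrable_iff_integrableOn_Ioc_of_le hs).1
    (intervalIntegral.intervalIntegrable_rpow' (a := 0) (b := s) hb)
  calc ∫ x in Ioc 0 s, x ^ b * (1 + x) ^ c ≤ ∫ x in Ioc 0 s, x ^ b := by
        refine integral_mono_of_nonneg ?_ hint ((ae_restrict_iff' measurableSet_Ioc).2 ?_)
        · exact (ae_restrict_iff' measurableSet_Ioc).2 (.of_forall fun x ⟨hx, _⟩ => by positivity)
        refine .of_forall fun x ⟨hx, _⟩ => mul_le_of_le_one_right (by positivity) ?_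
        exact Real.rpow_le_one_of_one_le_of_nonpos (by linarith) hc
    _ = s ^ (b + 1) / (b + 1) := by
        rw [← intervalIntegral.integral_of_le hs, integral_rpow (Or.inl hb),
          Real.zero_rpow (by linarith), sub_zero]

lemma exists_setIntegral_rpow_mul_one_add_rpow_le (hb : -1 < b) (hbc : b + c < -1) :
    ∃ M : ℝ, 0 ≤ M ∧ ∀ s : ℝ, 0 ≤ s →
      ∫ x in Ioc 0 s, x ^ b * (1 + x) ^ c ≤ M * min s 1 ^ (b + 1) := by
  have hint := integrableOn_rpow_mul_one_add_rpow hb hbc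
  set J := ∫ x in Ioi (0 : ℝ), x ^ b * (1 + x) ^ c
  have hnonneg : ∀ x ∈ Ioi (0 : ℝ), 0 ≤ x ^ b * (1 + x) ^ c := fun x (hx : 0 < x) => by positivity
  have hJ : 0 ≤ J := setIntegral_nonneg measurableSet_Ioi hnonneg
  refine ⟨max (1 / (b + 1)) J, by positivity, fun s hs => ?_⟩
  rcases le_total s 1 with h | h
  · rw [min_eq_left h]
    calc _ ≤ s ^ (b + 1) / (b + 1) := setIntegral_rpow_mul_one_add_rpow_le hb (by linarith) hs
      _ = 1 / (b + 1) * s ^ (b + 1) := by ring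
      _ ≤ _ := by gcongr; exact le_max_left _ _
  · rw [min_eq_right h, Real.one_rpow, mul_one]
    refine le_trans ?_ (le_max_right _ _)
    exact setIntegral_mono_set hint ((ae_restrict_iff' measurableSet_Ioi).2 (.of_forall hnonneg))
      Ioc_subset_Ioi_self.eventuallyLE

lemma one_add_half_rpow_mul_rpow_le (hb : -1 < b) (hbc : b + c < -1) {s : ℝ} (hs : 0 ≤ s) :
    (1 + s / 2) ^ c * s ^ (b + 1) ≤ (2 * s / (1 + s)) ^ (b + 1) := by
  calc (1 + s / 2) ^ c * s ^ (b + 1) ≤ (1 + s / 2) ^ (-(b + 1)) * s ^ (b + 1) := by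
        gcongr
        · linarith
        · linarith
    _ = (2 * s / (2 + s)) ^ (b + 1) := by
        rw [Real.rpow_neg (by positivity), ← Real.inv_rpow (by positivity),
          ← Real.mul_rpow (by positivity) hs]
        congr 1
        field_simp
    _ ≤ (2 * s / (1 + s)) ^ (b + 1) := by gcongr <;> linarith

lemma rpow_mul_one_add_rpow_mul_sub_rpow_le {a s x : ℝ} (hc : c ≤ 0) (hx : 0 < x) (hxs : x ≤ s) :
    x ^ b * (1 + x) ^ c * (s - x) ^ (a - 1) ≤
      max 1 (2 ^ (-(a - 1))) * s ^ (a - 1) * (x ^ b * (1 + x) ^ c) +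
        max 1 (2 ^ (-b)) * s ^ b * (1 + s / 2) ^ c * (s - x) ^ (a - 1) := by
  have hs : 0 < s := hx.trans_le hxs
  rcases le_total x (s / 2) with h | h
  · have hkernel : (s - x) ^ (a - 1) ≤ max 1 (2 ^ (-(a - 1))) * s ^ (a - 1) :=
      rpow_le_max_mul_rpow_of_half_le hs (by linarith) (by linarith)
    have hweight : 0 ≤ x ^ b * (1 + x) ^ c := by positivity
    have hsx : 0 ≤ s - x := by linarith
    have hright : 0 ≤ max 1 (2 ^ (-b)) * s ^ b * (1 + s / 2) ^ c * (s - x) ^ (a - 1) := by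
      positivity
    nlinarith
  · have hb' : x ^ b ≤ max 1 (2 ^ (-b)) * s ^ b := rpow_le_max_mul_rpow_of_half_le hs h hxs
    have hc' : (1 + x) ^ c ≤ (1 + s / 2) ^ c :=
      Real.rpow_le_rpow_of_nonpos (by positivity) (by linarith) hc
    have hkernel : 0 ≤ (s - x) ^ (a - 1) := Real.rpow_nonneg (by linarith) _
    have hleft : 0 ≤ max 1 (2 ^ (-(a - 1))) * s ^ (a - 1) * (x ^ b * (1 + x) ^ c) := by
      positivity
    have hweight : x ^ b * (1 + x) ^ c ≤ max 1 (2 ^ (-b)) * s ^ b * (1 + s / 2) ^ c :=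
      mul_le_mul hb' hc' (by positivity) (by positivity)
    nlinarith

theorem exists_setIntegral_rpow_mul_one_add_rpow_mul_sub_rpow_le {a : ℝ} (ha : 0 < a)
    (hb : -1 < b) (hbc : b + c < -1) :
    ∃ C : ℝ, 0 < C ∧ ∀ s : ℝ, 0 < s →
      ∫ x in Ioc 0 s, x ^ b * (1 + x) ^ c * (s - x) ^ (a - 1) ≤
        C * s ^ (a - 1) * (2 * s / (1 + s)) ^ (b + 1) := by
  have hc : c ≤ 0 := by linarith
  obtain ⟨M, hM, hbound⟩ := exists_setIntegral_rpow_mul_one_add_rpow_le hb hbc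
  set Ka : ℝ := max 1 (2 ^ (-(a - 1)))
  set Kb : ℝ := max 1 (2 ^ (-b))
  have hKa : 0 ≤ Ka := zero_le_one.trans (le_max_left _ _)
  have hKb : 0 ≤ Kb := zero_le_one.trans (le_max_left _ _)
  refine ⟨Ka * M + Kb / a, by positivity, fun s hs => ?_⟩
  have hh : IntegrableOn (fun x : ℝ => x ^ b * (1 + x) ^ c) (Ioc 0 s) :=
    (integrableOn_rpow_mul_one_add_rpow hb hbc).mono_set Ioc_subset_Ioi_self
  have hk : IntegrableOn (fun x : ℝ => (s - x) ^ (a - 1)) (Ioc 0 s) :=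
    (intervalIntegrable_iff_integrableOn_Ioc_of_le hs.le).1
      (intervalIntegrable_sub_rpow (by linarith) s)
  have hk_eq : ∫ x in Ioc 0 s, (s - x) ^ (a - 1) = s ^ a / a := by
    rw [← intervalIntegral.integral_of_le hs.le, integral_sub_rpow (by linarith), sub_add_cancel]
  set φ := (2 * s / (1 + s)) ^ (b + 1)
  have hmin : min s 1 ^ (b + 1) ≤ φ :=
    Real.rpow_le_rpow (by positivity) (min_le_two_mul_div_one_add hs.le) (by linarith)
  have hpow : s ^ b * s ^ a = s ^ (a - 1) * s ^ (b + 1) := by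
    rw [← Real.rpow_add hs, ← Real.rpow_add hs]
    ring_nf
  calc ∫ x in Ioc 0 s, x ^ b * (1 + x) ^ c * (s - x) ^ (a - 1)
      ≤ ∫ x in Ioc 0 s, (Ka * s ^ (a - 1) * (x ^ b * (1 + x) ^ c) +
          Kb * s ^ b * (1 + s / 2) ^ c * (s - x) ^ (a - 1)) := by
        refine integral_mono_of_nonneg ?_ ((hh.const_mul _).add (hk.const_mul _)) ?_
        · exact (ae_restrict_iff' measurableSet_Ioc).2 (.of_forall fun x ⟨hx, hxs⟩ => by
            have : 0 ≤ s - x := by linarith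
            positivity)
        · exact (ae_restrict_iff' measurableSet_Ioc).2 (.of_forall fun x ⟨hx, hxs⟩ =>
            rpow_mul_one_add_rpow_mul_sub_rpow_le hc hx hxs)
    _ = Ka * s ^ (a - 1) * (∫ x in Ioc 0 s, x ^ b * (1 + x) ^ c) +
          Kb / a * (s ^ (a - 1) * ((1 + s / 2) ^ c * s ^ (b + 1))) := by
        rw [integral_add (hh.const_mul _) (hk.const_mul _), integral_const_mul, integral_const_mul,
          hk_eq]
        linear_combination Kb / a * (1 + s / 2) ^ c * hpow
    _ ≤ Ka * s ^ (a - 1) * (M * φ) + Kb / a * (s ^ (a - 1) * φ) := by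
        gcongr
        · exact (hbound s hs.le).trans (by gcongr)
        · exact one_add_half_rpow_mul_rpow_le hb hbc hs.le
    _ = (Ka * M + Kb / a) * s ^ (a - 1) * φ := by ring

end

/-- For a > 0, b ≥ 0, b + c < −1, there is C with
∫_0^{t−r} λ^b ⟨λ⟩^c (t−r−λ)^{a−1} dλ ≤ C (t−r)^{a+b} ⟨t−r⟩^{−b−1} for t ≥ r > 0. -/
theorem stmt_14 (a b c : ℝ) (ha : 0 < a) (hb : 0 ≤ b) (hbc : b + c < -1) :
    ∃ C : ℝ, 0 < C ∧ ∀ r t : ℝ, 0 < r → r ≤ t →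
      (∫ lam in Set.Ioc (0 : ℝ) (t - r),
          lam ^ b * (1 + |lam|) ^ c * (t - r - lam) ^ (a - 1)) ≤
        C * (t - r) ^ (a + b) * (1 + |t - r|) ^ (-b - 1) := by
  obtain ⟨C, hC, hbound⟩ :=
    exists_setIntegral_rpow_mul_one_add_rpow_mul_sub_rpow_le ha (by linarith) hbc
  refine ⟨2 ^ (b + 1) * C, by positivity, fun r t _ hrt => ?_⟩
  obtain hs | hs := (sub_nonneg.2 hrt).eq_or_lt
  · simp [← hs, Real.zero_rpow (by positivity : a + b ≠ 0)]
  calc (∫ lam in Ioc 0 (t - r), lam ^ b * (1 + |lam|) ^ c * (t - r - lam) ^ (a - 1))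
      = ∫ lam in Ioc 0 (t - r), lam ^ b * (1 + lam) ^ c * (t - r - lam) ^ (a - 1) :=
        setIntegral_congr_fun measurableSet_Ioc fun lam hlam => by rw [abs_of_pos hlam.1]
    _ ≤ C * (t - r) ^ (a - 1) * (2 * (t - r) / (1 + (t - r))) ^ (b + 1) := hbound _ hs
    _ = 2 ^ (b + 1) * C * (t - r) ^ (a + b) * (1 + |t - r|) ^ (-b - 1) := by
        rw [mul_assoc, mul_rpow_two_mul_div_one_add hs, abs_of_pos hs]
        ring
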